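/- arXiv:1411.3824 — 7 statements merged into one kernel-verified Lean document; each statement's English description precedes it below -/
import Mathlib

section
/- Characterization of the curve P_λ: Let λ, a ∈ ℂ with λ ≠ 0 and a ≠ 0. The Hénon map H_{c,a} has a fixed point (x, y) at which the derivative matrix DH_{c,a}(x,y) = [[2x, a], [a, 0]] has λ as an eigenvalue if and only if c = (1 − a²)(λ/2 − a²/(2λ)) − (λ/2 − a²/(2λ))². Moreover, in that case the point q_a = (λ/2 − a²/(2λ), a·(λ/2 − a²/(2λ))) is such a fixed point, and the eigenvalues of the derivative at q_a are λ and μ = −a²/λ. -/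
open Metric Filter Topology Set

noncomputable section

/-- The complex Hénon map `H_{c,a}(x,y) = (x² + c + a y, a x)`. -/
def henon (c a : ℂ) : ℂ × ℂ → ℂ × ℂ := fun P => (P.1 ^ 2 + c + a * P.2, a * P.1)

/-- The derivative matrix of the Hénon map at a point `(x, y)`. -/
def henonDeriv (a : ℂ) (P : ℂ × ℂ) : Matrix (Fin 2) (Fin 2) ℂ := !![2 * P.1, a; a, 0]

/-!
At a fixed point `(x, y)` of `H_{c,a}` one has `y = a x` and `c = (1 - a²) x - x²`. The derivative
there has trace `2x` and determinant `-a²`, so `λ` is an eigenvalue iff `λ² - 2xλ - a² = 0`, which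
for `λ ≠ 0` pins down `x = λ/2 - a²/(2λ)`. The other eigenvalue is `det / λ = -a²/λ`.
-/

namespace Matrix

variable {K : Type*} [Field K]

theorem mem_spectrum_fin_two_iff (A : Matrix (Fin 2) (Fin 2) K) (μ : K) :
    μ ∈ spectrum K A ↔ μ ^ 2 - A.trace * μ + A.det = 0 := by
  simp [mem_spectrum_iff_isRoot_charpoly, charpoly_fin_two]

theorem det_div_mem_spectrum_fin_two {A : Matrix (Fin 2) (Fin 2) K} {μ : K}
    (hμ : μ ∈ spectrum K A) (hμ₀ : μ ≠ 0) : A.det / μ ∈ spectrum K A := by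
  rw [mem_spectrum_fin_two_iff] at hμ ⊢
  field_simp
  linear_combination A.det * hμ

end Matrix

theorem henon_eq_self_iff {c a : ℂ} {P : ℂ × ℂ} :
    henon c a P = P ↔ P.2 = a * P.1 ∧ c = (1 - a ^ 2) * P.1 - P.1 ^ 2 := by
  obtain ⟨x, y⟩ := P
  simp only [henon, Prod.mk.injEq]
  constructor
  · rintro ⟨hx, hy⟩
    exact ⟨hy.symm, by linear_combination hx + a * hy⟩
  · rintro ⟨hy, hc⟩
    exact ⟨by linear_combination hc + a * hy, hy.symm⟩

theorem henonDeriv_trace (a : ℂ) (P : ℂ × ℂ) : (henonDeriv a P).trace = 2 * P.1 := by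
  simp [henonDeriv, Matrix.trace_fin_two]

theorem henonDeriv_det (a : ℂ) (P : ℂ × ℂ) : (henonDeriv a P).det = -a ^ 2 := by
  simp [henonDeriv, Matrix.det_fin_two, sq]

theorem mem_spectrum_henonDeriv_iff {lam : ℂ} (hlam : lam ≠ 0) (a : ℂ) (P : ℂ × ℂ) :
    lam ∈ spectrum ℂ (henonDeriv a P) ↔ P.1 = lam / 2 - a ^ 2 / (2 * lam) := by
  rw [Matrix.mem_spectrum_fin_two_iff, henonDeriv_trace, henonDeriv_det]
  constructor
  · intro h
    field_simp
    linear_combination -h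
  · intro h
    rw [h]
    field_simp
    ring

theorem curve_P_lambda_general (lam a c : ℂ) (hlam : lam ≠ 0) :
    ((∃ P : ℂ × ℂ, henon c a P = P ∧ lam ∈ spectrum ℂ (henonDeriv a P)) ↔
      c = (1 - a ^ 2) * (lam / 2 - a ^ 2 / (2 * lam)) - (lam / 2 - a ^ 2 / (2 * lam)) ^ 2) ∧
    (c = (1 - a ^ 2) * (lam / 2 - a ^ 2 / (2 * lam)) - (lam / 2 - a ^ 2 / (2 * lam)) ^ 2 →
      henon c a (lam / 2 - a ^ 2 / (2 * lam), a * (lam / 2 - a ^ 2 / (2 * lam))) =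
        (lam / 2 - a ^ 2 / (2 * lam), a * (lam / 2 - a ^ 2 / (2 * lam))) ∧
      lam ∈ spectrum ℂ (henonDeriv a (lam / 2 - a ^ 2 / (2 * lam),
        a * (lam / 2 - a ^ 2 / (2 * lam)))) ∧
      (-a ^ 2 / lam) ∈ spectrum ℂ (henonDeriv a (lam / 2 - a ^ 2 / (2 * lam),
        a * (lam / 2 - a ^ 2 / (2 * lam))))) := by
  set x₀ := lam / 2 - a ^ 2 / (2 * lam)
  have hq_fixed (hc : c = (1 - a ^ 2) * x₀ - x₀ ^ 2) : henon c a (x₀, a * x₀) = (x₀, a * x₀) :=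
    henon_eq_self_iff.2 ⟨rfl, hc⟩
  have hq_spec : lam ∈ spectrum ℂ (henonDeriv a (x₀, a * x₀)) :=
    (mem_spectrum_henonDeriv_iff hlam a _).2 rfl
  refine ⟨⟨?_, fun hc => ⟨_, hq_fixed hc, hq_spec⟩⟩, fun hc => ⟨hq_fixed hc, hq_spec, ?_⟩⟩
  · rintro ⟨P, hP_fixed, hP_spec⟩
    rw [(henon_eq_self_iff.1 hP_fixed).2, (mem_spectrum_henonDeriv_iff hlam a P).1 hP_spec]
  · simpa only [henonDeriv_det] using Matrix.det_div_mem_spectrum_fin_two hq_spec hlam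

/-- **Characterization of the curve `P_λ`.** For `λ ≠ 0`, `a ≠ 0`, the Hénon map `H_{c,a}` has
a fixed point at which the derivative has eigenvalue `λ` iff
`c = (1 - a²)(λ/2 - a²/(2λ)) - (λ/2 - a²/(2λ))²`; in that case
`q_a = (λ/2 - a²/(2λ), a(λ/2 - a²/(2λ)))` is such a fixed point with eigenvalues `λ` and
`μ = -a²/λ`. -/
theorem curve_P_lambda (lam a c : ℂ) (hlam : lam ≠ 0) (ha : a ≠ 0) :
    ((∃ P : ℂ × ℂ, henon c a P = P ∧ lam ∈ spectrum ℂ (henonDeriv a P)) ↔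
      c = (1 - a ^ 2) * (lam / 2 - a ^ 2 / (2 * lam)) - (lam / 2 - a ^ 2 / (2 * lam)) ^ 2) ∧
    (c = (1 - a ^ 2) * (lam / 2 - a ^ 2 / (2 * lam)) - (lam / 2 - a ^ 2 / (2 * lam)) ^ 2 →
      henon c a (lam / 2 - a ^ 2 / (2 * lam), a * (lam / 2 - a ^ 2 / (2 * lam))) =
        (lam / 2 - a ^ 2 / (2 * lam), a * (lam / 2 - a ^ 2 / (2 * lam))) ∧
      lam ∈ spectrum ℂ (henonDeriv a (lam / 2 - a ^ 2 / (2 * lam),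
        a * (lam / 2 - a ^ 2 / (2 * lam)))) ∧
      (-a ^ 2 / lam) ∈ spectrum ℂ (henonDeriv a (lam / 2 - a ^ 2 / (2 * lam),
        a * (lam / 2 - a ^ 2 / (2 * lam))))) :=
  curve_P_lambda_general lam a c hlam
end
end

section
/- Dynamics in the attractive petal at infinity: Let m ≥ 1 be an integer, μ ∈ ℂ with |μ| < 1, r > 0, R₁ > 0, and K₁, K₂ ≥ 0 constants with √2·K₁/R₁ < 1/2 and 2^{1/(2m)}·K₂/R₁^{1/m} < (1 − |μ|)·r. Let U = {X ∈ ℂ : R₁ − Re(X) < |Im(X)|} and W = U × {Y ∈ ℂ : |Y| < r}, and let F = (F₁, F₂) : W → ℂ² satisfy |F₁(X, Y) − X − 1| ≤ K₁/|X| and |F₂(X, Y) − μY| ≤ K₂/|X|^{1/m} for all (X, Y) ∈ W. Then: (i) every X ∈ U satisfies |X| > R₁/√2; (ii) F(W) ⊆ W; (iii) for every (X₀, Y₀) ∈ W, the orbit (X_n, Y_n) = F^{∘n}(X₀, Y₀) satisfies Re(X_n) ≥ Re(X₀) + n/2 for all n ≥ 0 (in particular |X_n| → ∞), and Y_n → 0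 as n → ∞. -/
/-!
For `X ∈ U` one has `R₁ < Re X + |Im X| ≤ √2 |X|`, so on `W` the error bounds are uniformly
smaller than `1/2` and `(1 - |μ|) r`. The first makes `F₁` a unit translation up to an error of size
at most `1/2`, which raises `Re X` by at least `1/2` and keeps `X` in `U`; the second gives
`|F₂| < |μ| r + (1 - |μ|) r = r`. Along an orbit `|X_n| → ∞`, so `|Y_{n+1}| ≤ |μ| |Y_n| + ε_n`
with `ε_n → 0`, which forces `Y_n → 0`.
-/

open Metric Filter Topology Set

noncomputable section

/-- The region `U = {X ∈ ℂ : R₁ − Re X < |Im X|}` near infinity. -/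
def petalU (R₁ : ℝ) : Set ℂ := {X | R₁ - X.re < |X.im|}

/-- The region `W = U × D_r`. -/
def petalW (R₁ r : ℝ) : Set (ℂ × ℂ) := petalU R₁ ×ˢ Metric.ball (0 : ℂ) r

theorem tendsto_zero_of_le_mul_add {a : ℝ} {u e : ℕ → ℝ} (ha₀ : 0 ≤ a) (ha₁ : a < 1)
    (hu : ∀ n, 0 ≤ u n) (hrec : ∀ n, u (n + 1) ≤ a * u n + e n)
    (he : Tendsto e atTop (𝓝 0)) : Tendsto u atTop (𝓝 0) := by
  refine tendsto_order.2 ⟨fun b hb => Eventually.of_forall fun n => hb.trans_le (hu n),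
    fun ε hε => ?_⟩
  obtain ⟨M, hM⟩ := eventually_atTop.1
    ((tendsto_order.1 he).2 ((1 - a) * (ε / 2)) (mul_pos (sub_pos.2 ha₁) (half_pos hε)))
  -- Past `M` the recursion contracts the excess of `u` over `ε / 2` by the factor `a`.
  have hcontract : ∀ k, u (M + k) - ε / 2 ≤ a ^ k * (u M - ε / 2) := by
    intro k
    induction k with
    | zero => simp
    | succ k ih =>
      calc u (M + k + 1) - ε / 2 ≤ a * (u (M + k) - ε / 2) := by
            linarith [hrec (M + k), hM (M + k) le_self_add]
        _ ≤ a * (a ^ k * (u M - ε / 2)) := mul_le_mul_of_nonneg_left ih ha₀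
        _ = a ^ (k + 1) * (u M - ε / 2) := by ring
  have hpow : Tendsto (fun k => a ^ k * (u M - ε / 2)) atTop (𝓝 0) := by
    simpa using (tendsto_pow_atTop_nhds_zero_of_lt_one ha₀ ha₁).mul_const (u M - ε / 2)
  obtain ⟨K, hK⟩ := eventually_atTop.1 ((tendsto_order.1 hpow).2 (ε / 2) (half_pos hε))
  refine eventually_atTop.2 ⟨M + K, fun n hn => ?_⟩
  obtain ⟨k, rfl⟩ := Nat.exists_eq_add_of_le (le_self_add.trans hn)
  linarith [hcontract k, hK k (by omega)]

theorem add_mul_le_apply_iterate {α : Type*} {f : α → α} {s : Set α} {g : α → ℝ} {c : ℝ}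
    (hf : MapsTo f s s) (hg : ∀ x ∈ s, g x + c ≤ g (f x)) {x : α} (hx : x ∈ s) (n : ℕ) :
    g x + n * c ≤ g (f^[n] x) := by
  induction n with
  | zero => simp
  | succ n ih =>
    rw [Function.iterate_succ_apply']
    push_cast
    linarith [hg _ (hf.iterate n hx)]

theorem norm_le_norm_mul_add_norm_sub {R : Type*} [NormedRing R] (z μ y : R) :
    ‖z‖ ≤ ‖μ‖ * ‖y‖ + ‖z - μ * y‖ :=
  (norm_le_norm_add_norm_sub' z (μ * y)).trans (add_le_add (norm_mul_le μ y) le_rfl)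

theorem Complex.re_add_abs_im_le_sqrt_two_mul_norm (z : ℂ) : z.re + |z.im| ≤ √2 * ‖z‖ := by
  have hsq : (z.re + |z.im|) ^ 2 ≤ (√2 * ‖z‖) ^ 2 := by
    rw [mul_pow, Real.sq_sqrt zero_le_two, Complex.sq_norm, Complex.normSq_apply]
    nlinarith [sq_nonneg (z.re - |z.im|), sq_abs z.im]
  exact abs_le_of_sq_le_sq' hsq (by positivity) |>.2

theorem Real.div_rpow_div_sqrt_two {R : ℝ} (hR : 0 ≤ R) (K x : ℝ) :
    K / (R / √2) ^ x = 2 ^ (x / 2) * K / R ^ x := by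
  rw [Real.div_rpow hR (Real.sqrt_nonneg 2), Real.sqrt_eq_rpow,
    ← Real.rpow_mul zero_le_two, div_div_eq_mul_div, mul_comm (1 / 2) x, ← div_eq_mul_one_div]
  ring

section Petal

variable {R₁ : ℝ}

theorem lt_norm_of_mem_petalU {X : ℂ} (hX : X ∈ petalU R₁) : R₁ / √2 < ‖X‖ := by
  rw [div_lt_iff₀' (by positivity)]
  have : R₁ - X.re < |X.im| := hX
  linarith [X.re_add_abs_im_le_sqrt_two_mul_norm]

theorem div_rpow_le_of_mem_petalU (hR₁ : 0 < R₁) {K : ℝ} (hK : 0 ≤ K) {x : ℝ} (hx : 0 ≤ x)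
    {X : ℂ} (hX : X ∈ petalU R₁) : K / ‖X‖ ^ x ≤ K / (R₁ / √2) ^ x :=
  div_le_div_of_nonneg_left hK (by positivity)
    (Real.rpow_le_rpow (by positivity) (lt_norm_of_mem_petalU hX).le hx)

theorem re_add_half_le_of_norm_sub_sub_one_le {X Z : ℂ} (hZ : ‖Z - X - 1‖ ≤ 1 / 2) :
    X.re + 1 / 2 ≤ Z.re := by
  have := neg_abs_le (Z - X - 1).re
  have := Complex.abs_re_le_norm (Z - X - 1)
  simp only [Complex.sub_re, Complex.one_re] at *
  linarith

-- The boundary of `U` has slopes `±1`, so a unit step to the right beats an error of size `1/2`.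
theorem mem_petalU_of_norm_sub_sub_one_le {X Z : ℂ} (hX : X ∈ petalU R₁)
    (hZ : ‖Z - X - 1‖ ≤ 1 / 2) : Z ∈ petalU R₁ := by
  have hX' : R₁ - X.re < |X.im| := hX
  have hre := re_add_half_le_of_norm_sub_sub_one_le hZ
  have him : |X.im| - |Z.im| ≤ |(Z - X - 1).im| := by
    rw [show (Z - X - 1).im = Z.im - X.im by simp, abs_sub_comm]
    exact abs_sub_abs_le_abs_sub _ _
  have := Complex.abs_im_le_norm (Z - X - 1)
  show R₁ - Z.re < |Z.im|
  linarith

variable {m : ℕ} {mu : ℂ} {r K₁ K₂ : ℝ} {F : ℂ × ℂ → ℂ × ℂ}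

theorem apply_mem_petalW_and_re_add_half_le (hR₁ : 0 < R₁) (hK₁ : 0 ≤ K₁) (hK₂ : 0 ≤ K₂)
    (hb₁ : √2 * K₁ / R₁ < 1 / 2)
    (hb₂ : (2 : ℝ) ^ ((1 : ℝ) / (2 * (m : ℝ))) * K₂ / R₁ ^ ((1 : ℝ) / (m : ℝ)) <
      (1 - ‖mu‖) * r)
    (hF₁ : ∀ P ∈ petalW R₁ r, ‖(F P).1 - P.1 - 1‖ ≤ K₁ / ‖P.1‖)
    (hF₂ : ∀ P ∈ petalW R₁ r, ‖(F P).2 - mu * P.2‖ ≤ K₂ / ‖P.1‖ ^ ((1 : ℝ) / (m : ℝ)))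
    {P : ℂ × ℂ} (hP : P ∈ petalW R₁ r) :
    F P ∈ petalW R₁ r ∧ P.1.re + 1 / 2 ≤ (F P).1.re := by
  obtain ⟨hPU, hPY⟩ := hP
  rw [mem_ball_zero_iff] at hPY
  have hfst : ‖(F P).1 - P.1 - 1‖ ≤ 1 / 2 :=
    calc ‖(F P).1 - P.1 - 1‖ ≤ K₁ / ‖P.1‖ := hF₁ P ⟨hPU, mem_ball_zero_iff.2 hPY⟩
      _ = K₁ / ‖P.1‖ ^ (1 : ℝ) := by rw [Real.rpow_one]
      _ ≤ K₁ / (R₁ / √2) ^ (1 : ℝ) := div_rpow_le_of_mem_petalU hR₁ hK₁ zero_le_one hPU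
      _ = √2 * K₁ / R₁ := by rw [Real.rpow_one]; field_simp
      _ ≤ 1 / 2 := hb₁.le
  have herr₂ : K₂ / ‖P.1‖ ^ ((1 : ℝ) / m) < (1 - ‖mu‖) * r :=
    calc K₂ / ‖P.1‖ ^ ((1 : ℝ) / m) ≤ K₂ / (R₁ / √2) ^ ((1 : ℝ) / m) :=
          div_rpow_le_of_mem_petalU hR₁ hK₂ (by positivity) hPU
      _ = (2 : ℝ) ^ ((1 : ℝ) / (2 * m)) * K₂ / R₁ ^ ((1 : ℝ) / m) := by
          rw [Real.div_rpow_div_sqrt_two hR₁.le, div_div, mul_comm (m : ℝ)]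
      _ < (1 - ‖mu‖) * r := hb₂
  have hsnd : ‖(F P).2‖ < r :=
    calc ‖(F P).2‖ ≤ ‖mu‖ * ‖P.2‖ + ‖(F P).2 - mu * P.2‖ := norm_le_norm_mul_add_norm_sub _ _ _
      _ < ‖mu‖ * r + (1 - ‖mu‖) * r :=
          add_lt_add_of_le_of_lt (mul_le_mul_of_nonneg_left hPY.le (norm_nonneg mu))
            ((hF₂ P ⟨hPU, mem_ball_zero_iff.2 hPY⟩).trans_lt herr₂)
      _ = r := by ring
  exact ⟨⟨mem_petalU_of_norm_sub_sub_one_le hPU hfst, mem_ball_zero_iff.2 hsnd⟩,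
    re_add_half_le_of_norm_sub_sub_one_le hfst⟩

end Petal

theorem petal_dynamics_general (m : ℕ) (hm : 1 ≤ m) (mu : ℂ) (hmu : ‖mu‖ < 1)
    (r R₁ K₁ K₂ : ℝ) (hR₁ : 0 < R₁) (hK₁ : 0 ≤ K₁) (hK₂ : 0 ≤ K₂)
    (hb₁ : Real.sqrt 2 * K₁ / R₁ < 1 / 2)
    (hb₂ : (2 : ℝ) ^ ((1 : ℝ) / (2 * (m : ℝ))) * K₂ / R₁ ^ ((1 : ℝ) / (m : ℝ)) <
      (1 - ‖mu‖) * r)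
    (F : ℂ × ℂ → ℂ × ℂ)
    (hF₁ : ∀ P ∈ petalW R₁ r, ‖(F P).1 - P.1 - 1‖ ≤ K₁ / ‖P.1‖)
    (hF₂ : ∀ P ∈ petalW R₁ r,
      ‖(F P).2 - mu * P.2‖ ≤ K₂ / ‖P.1‖ ^ ((1 : ℝ) / (m : ℝ))) :
    (∀ X ∈ petalU R₁, R₁ / Real.sqrt 2 < ‖X‖) ∧
    Set.MapsTo F (petalW R₁ r) (petalW R₁ r) ∧
    (∀ P ∈ petalW R₁ r,
      (∀ n : ℕ, P.1.re + (n : ℝ) / 2 ≤ ((F^[n] P).1).re) ∧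
      Filter.Tendsto (fun n : ℕ => ‖(F^[n] P).1‖) Filter.atTop Filter.atTop ∧
      Filter.Tendsto (fun n : ℕ => (F^[n] P).2) Filter.atTop (nhds 0)) := by
  have hstep := fun P (hP : P ∈ petalW R₁ r) =>
    apply_mem_petalW_and_re_add_half_le hR₁ hK₁ hK₂ hb₁ hb₂ hF₁ hF₂ hP
  have hmaps : MapsTo F (petalW R₁ r) (petalW R₁ r) := fun P hP => (hstep P hP).1
  refine ⟨fun X hX => lt_norm_of_mem_petalU hX, hmaps, fun P hP => ?_⟩
  have hre (n : ℕ) : P.1.re + (n : ℝ) / 2 ≤ (F^[n] P).1.re := by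
    have h := add_mul_le_apply_iterate (g := fun Q => Q.1.re) hmaps
      (fun Q hQ => (hstep Q hQ).2) hP n
    linarith
  have hnorm : Tendsto (fun n : ℕ => ‖(F^[n] P).1‖) atTop atTop :=
    tendsto_atTop_mono (fun n => (hre n).trans (Complex.re_le_norm _))
      (tendsto_atTop_add_const_left _ _ (tendsto_natCast_atTop_atTop.atTop_div_const two_pos))
  have hexp : (0 : ℝ) < 1 / m := one_div_pos.2 (Nat.cast_pos.2 hm)
  refine ⟨hre, hnorm, tendsto_zero_iff_norm_tendsto_zero.2 ?_⟩
  refine tendsto_zero_of_le_mul_add (e := fun n => K₂ / ‖(F^[n] P).1‖ ^ ((1 : ℝ) / m))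
    (norm_nonneg mu) hmu (fun n => norm_nonneg _) (fun n => ?_)
    (tendsto_const_nhds.div_atTop ((tendsto_rpow_atTop hexp).comp hnorm))
  rw [Function.iterate_succ_apply']
  exact (norm_le_norm_mul_add_norm_sub _ _ _).trans
    (add_le_add le_rfl (hF₂ _ (hmaps.iterate n hP)))

/-- **Dynamics in the attractive petal at infinity.** If `F(X,Y) = (X + 1 + O(1/|X|),
μY + O(1/|X|^{1/m}))` on `W = U × D_r` with the stated bounds, then every `X ∈ U` satisfies
`|X| > R₁/√2`, `F` maps `W` into itself, and along every orbit in `W` the real parts of the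
first coordinates grow at least linearly (so `|X_n| → ∞`) while the second coordinates tend
to `0`. -/
theorem petal_dynamics (m : ℕ) (hm : 1 ≤ m) (mu : ℂ) (hmu : ‖mu‖ < 1)
    (r R₁ K₁ K₂ : ℝ) (hr : 0 < r) (hR₁ : 0 < R₁) (hK₁ : 0 ≤ K₁) (hK₂ : 0 ≤ K₂)
    (hb₁ : Real.sqrt 2 * K₁ / R₁ < 1 / 2)
    (hb₂ : (2 : ℝ) ^ ((1 : ℝ) / (2 * (m : ℝ))) * K₂ / R₁ ^ ((1 : ℝ) / (m : ℝ)) <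
      (1 - ‖mu‖) * r)
    (F : ℂ × ℂ → ℂ × ℂ)
    (hF₁ : ∀ P ∈ petalW R₁ r, ‖(F P).1 - P.1 - 1‖ ≤ K₁ / ‖P.1‖)
    (hF₂ : ∀ P ∈ petalW R₁ r,
      ‖(F P).2 - mu * P.2‖ ≤ K₂ / ‖P.1‖ ^ ((1 : ℝ) / (m : ℝ))) :
    (∀ X ∈ petalU R₁, R₁ / Real.sqrt 2 < ‖X‖) ∧
    Set.MapsTo F (petalW R₁ r) (petalW R₁ r) ∧
    (∀ P ∈ petalW R₁ r,
      (∀ n : ℕ, P.1.re + (n : ℝ) / 2 ≤ ((F^[n] P).1).re) ∧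
      Filter.Tendsto (fun n : ℕ => ‖(F^[n] P).1‖) Filter.atTop Filter.atTop ∧
      Filter.Tendsto (fun n : ℕ => (F^[n] P).2) Filter.atTop (nhds 0)) :=
  petal_dynamics_general m hm mu hmu r R₁ K₁ K₂ hR₁ hK₁ hK₂ hb₁ hb₂ F hF₁ hF₂
end
end

section
/- Horizontal cone invariance and expansion in the repelling sectors: Let q ≥ 1 be an integer, λ, μ ∈ ℂ with |λ| = 1, and constants ε₁, m, M, N ≥ 0 with 2N + |μ| < 1/2. Let x ∈ ℂ satisfy |1 + (q+1)x^q| − m|x|^{2q} − M|x|^{2q+2} ≥ 1 + (ε₁/2)|x|^q. Suppose G_x, G_y, P_x, P_y ∈ ℂ satisfy |G_x| ≤ m|x|^{2q}, |G_y| ≤ M|x|^{2q+2}, |P_x| ≤ N, |P_y| ≤ N. For any (ξ, η) ∈ ℂ² with |ξ| > |η|, define ξ' = λ(1 + (q+1)x^q + G_x)·ξ + λ·G_y·η and η' = P_x·ξ + (μ + P_y)·η. Then |η'| < |ξ'| and max(|ξ'|, |η'|) ≥ (1 + (ε₁/2)|x|^q)·max(|ξ|, |η|). -/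
open Metric Filter Topology Set

noncomputable section

/-! On the cone `‖η‖ < ‖ξ‖` the image of `(ξ, η)` under `[[α, β], [γ, δ]]` has first
coordinate of norm at least `(‖α‖ - ‖β‖)‖ξ‖` and second of norm at most `(‖γ‖ + ‖δ‖)‖ξ‖`.
For the derivative of the Hénon map, the hypothesis on `x` bounds `‖α‖ - ‖β‖` below by the
expansion factor `1 + (ε₁/2)|x|^q ≥ 1`, while `‖γ‖ + ‖δ‖ ≤ 2N + |μ| < 1`. -/

section ConeEstimates

variable {𝕜 : Type*} [NormedDivisionRing 𝕜]

theorem norm_mul_add_mul_le_of_norm_le (γ δ ξ η : 𝕜) (h : ‖η‖ ≤ ‖ξ‖) :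
    ‖γ * ξ + δ * η‖ ≤ (‖γ‖ + ‖δ‖) * ‖ξ‖ :=
  calc ‖γ * ξ + δ * η‖ ≤ ‖γ‖ * ‖ξ‖ + ‖δ‖ * ‖η‖ := by
        simpa only [norm_mul] using norm_add_le (γ * ξ) (δ * η)
    _ ≤ (‖γ‖ + ‖δ‖) * ‖ξ‖ := by nlinarith [norm_nonneg δ]

theorem sub_mul_le_norm_mul_add_mul_of_norm_le (α β ξ η : 𝕜) (h : ‖η‖ ≤ ‖ξ‖) :
    (‖α‖ - ‖β‖) * ‖ξ‖ ≤ ‖α * ξ + β * η‖ :=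
  calc (‖α‖ - ‖β‖) * ‖ξ‖ ≤ ‖α‖ * ‖ξ‖ - ‖β‖ * ‖η‖ := by nlinarith [norm_nonneg β]
    _ ≤ ‖α * ξ + β * η‖ := by
        simpa only [norm_mul] using norm_sub_le_norm_add (α * ξ) (β * η)

theorem cone_mapsTo_and_expands (α β γ δ ξ η : 𝕜) {c : ℝ} (hc : 1 ≤ c)
    (hα : c ≤ ‖α‖ - ‖β‖) (hγδ : ‖γ‖ + ‖δ‖ < 1) (hcone : ‖η‖ < ‖ξ‖) :
    ‖γ * ξ + δ * η‖ < ‖α * ξ + β * η‖ ∧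
      c * max ‖ξ‖ ‖η‖ ≤ max ‖α * ξ + β * η‖ ‖γ * ξ + δ * η‖ := by
  have hξ : 0 < ‖ξ‖ := (norm_nonneg η).trans_lt hcone
  have hexpand : c * ‖ξ‖ ≤ ‖α * ξ + β * η‖ :=
    (mul_le_mul_of_nonneg_right hα hξ.le).trans
      (sub_mul_le_norm_mul_add_mul_of_norm_le α β ξ η hcone.le)
  have hcontract : ‖γ * ξ + δ * η‖ < ‖ξ‖ :=
    (norm_mul_add_mul_le_of_norm_le γ δ ξ η hcone.le).trans_lt
      (mul_lt_of_lt_one_left hξ hγδ)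
  refine ⟨hcontract.trans_le ((le_mul_of_one_le_left hξ.le hc).trans hexpand), ?_⟩
  rw [max_eq_left hcone.le]
  exact le_max_of_le_left hexpand

end ConeEstimates

theorem horizontal_cone_expansion_general (q : ℕ) (lam mu : ℂ)
    (hlam : ‖lam‖ = 1) (eps1 m M N : ℝ)
    (heps1 : 0 ≤ eps1)
    (hNmu : 2 * N + ‖mu‖ < 1 / 2)
    (x : ℂ)
    (hx : 1 + eps1 / 2 * ‖x‖ ^ q ≤
      ‖1 + ((q : ℂ) + 1) * x ^ q‖ - m * ‖x‖ ^ (2 * q) -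
        M * ‖x‖ ^ (2 * q + 2))
    (Gx Gy Px Py : ℂ)
    (hGx : ‖Gx‖ ≤ m * ‖x‖ ^ (2 * q))
    (hGy : ‖Gy‖ ≤ M * ‖x‖ ^ (2 * q + 2))
    (hPx : ‖Px‖ ≤ N) (hPy : ‖Py‖ ≤ N)
    (ξ η : ℂ) (hcone : ‖η‖ < ‖ξ‖) :
    ‖Px * ξ + (mu + Py) * η‖ <
      ‖lam * (1 + ((q : ℂ) + 1) * x ^ q + Gx) * ξ + lam * Gy * η‖ ∧
    (1 + eps1 / 2 * ‖x‖ ^ q) * max (‖ξ‖) (‖η‖) ≤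
      max (‖lam * (1 + ((q : ℂ) + 1) * x ^ q + Gx) * ξ + lam * Gy * η‖)
        (‖Px * ξ + (mu + Py) * η‖) := by
  have hc : 1 ≤ 1 + eps1 / 2 * ‖x‖ ^ q := le_add_of_nonneg_right (by positivity)
  have hdiag : 1 + eps1 / 2 * ‖x‖ ^ q ≤
      ‖lam * (1 + ((q : ℂ) + 1) * x ^ q + Gx)‖ - ‖lam * Gy‖ := by
    simp only [norm_mul, hlam, one_mul]
    linarith [norm_sub_le_norm_add (1 + ((q : ℂ) + 1) * x ^ q) Gx]
  have hoffdiag : ‖Px‖ + ‖mu + Py‖ < 1 := by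
    linarith [norm_add_le mu Py]
  exact cone_mapsTo_and_expands _ _ Px (mu + Py) ξ η hc hdiag hoffdiag hcone

/-- **Horizontal cone invariance and expansion in the repelling sectors.** The derivative of
the normal-form semi-parabolic Hénon map, sending `(ξ, η)` to
`(λ(1 + (q+1)x^q + G_x)ξ + λG_yη, P_xξ + (μ + P_y)η)`, maps the horizontal cone
`{|ξ| > |η|}` into itself and expands the max-norm by at least `1 + (ε₁/2)|x|^q`. -/
theorem horizontal_cone_expansion (q : ℕ) (hq : 1 ≤ q) (lam mu : ℂ)
    (hlam : ‖lam‖ = 1) (eps1 m M N : ℝ)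
    (heps1 : 0 ≤ eps1) (hm : 0 ≤ m) (hM : 0 ≤ M) (hN : 0 ≤ N)
    (hNmu : 2 * N + ‖mu‖ < 1 / 2)
    (x : ℂ)
    (hx : 1 + eps1 / 2 * ‖x‖ ^ q ≤
      ‖1 + ((q : ℂ) + 1) * x ^ q‖ - m * ‖x‖ ^ (2 * q) -
        M * ‖x‖ ^ (2 * q + 2))
    (Gx Gy Px Py : ℂ)
    (hGx : ‖Gx‖ ≤ m * ‖x‖ ^ (2 * q))
    (hGy : ‖Gy‖ ≤ M * ‖x‖ ^ (2 * q + 2))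
    (hPx : ‖Px‖ ≤ N) (hPy : ‖Py‖ ≤ N)
    (ξ η : ℂ) (hcone : ‖η‖ < ‖ξ‖) :
    ‖Px * ξ + (mu + Py) * η‖ <
      ‖lam * (1 + ((q : ℂ) + 1) * x ^ q + Gx) * ξ + lam * Gy * η‖ ∧
    (1 + eps1 / 2 * ‖x‖ ^ q) * max (‖ξ‖) (‖η‖) ≤
      max (‖lam * (1 + ((q : ℂ) + 1) * x ^ q + Gx) * ξ + lam * Gy * η‖)
        (‖Px * ξ + (mu + Py) * η‖) :=
  horizontal_cone_expansion_general q lam mu hlam eps1 m M N heps1 hNmu x hx Gx Gy Px Py hGx hGy hPx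
    hPy ξ η hcone
end
end

section
/- Vertical cone invariance and contraction in the repelling sectors: Let q ≥ 1 be an integer, λ, μ ∈ ℂ with |λ| = 1, and constants m, M, N, M₁ ≥ 0 with N ≤ 1/3. Let x, x₁ ∈ ℂ with |x| < 1 and |x₁| ≤ M₁·|x|, and suppose A₁ := |1 + (q+1)x^q| − (m + M₁^{2q}·N)·|x|^{2q} ≥ 2/3 and A₂ := M₁^{2q}·(|μ| + N) + M·|x|² ≤ 1/3. Suppose G_x, G_y, P_x, P_y ∈ ℂ satisfy |G_x| ≤ m|x|^{2q}, |G_y| ≤ M|x|^{2q+2}, |P_x| ≤ N, |P_y| ≤ N. Let (ξ, η) ∈ ℂ² with (ξ, η) ≠ (0, 0), and set ξ' = λ(1 + (q+1)x^q + G_x)·ξ + λ·G_y·η and η' = P_x·ξ + (μ + P_y)·η. If |ξ'| < |x₁|^{2q}·|η'|, then |ξ| < |x|^{2q}·|η| and |η'| ≤ (|μ| + (3/2)N)·|η|. -/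
/-! Write `K = |x|^{2q}`. The derivative bounds give `|ξ'| ≥ (|1 + (q+1)x^q| - mK)|ξ| - M|x|²K|η|`
and `|η'| ≤ N|ξ| + (|μ| + N)|η|`, while `|x₁|^{2q} ≤ M₁^{2q}K`. Inserted into the cone condition
`|ξ'| < |x₁|^{2q}|η'|` these rearrange to `A₁|ξ| < A₂K|η|`, hence `|ξ| < K|η|/2`; feeding this back
into the bound for `|η'|` and using `K ≤ 1` gives the contraction estimate. -/

section NormBounds

variable {𝕜 : Type*}

theorem le_norm_mul_add_mul_of_norm_eq_one [NormedDivisionRing 𝕜] {l B G H u v : 𝕜} {g h : ℝ}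
    (hl : ‖l‖ = 1) (hG : ‖G‖ ≤ g) (hH : ‖H‖ ≤ h) :
    (‖B‖ - g) * ‖u‖ - h * ‖v‖ ≤ ‖l * (B + G) * u + l * H * v‖ := by
  have hBG : ‖B‖ - g ≤ ‖B + G‖ := by linarith [norm_sub_le_norm_add B G]
  calc (‖B‖ - g) * ‖u‖ - h * ‖v‖ ≤ ‖B + G‖ * ‖u‖ - ‖H‖ * ‖v‖ := by
        gcongr
    _ = ‖(B + G) * u‖ - ‖-(H * v)‖ := by rw [norm_neg, norm_mul, norm_mul]
    _ ≤ ‖(B + G) * u + H * v‖ := by simpa using norm_sub_norm_le ((B + G) * u) (-(H * v))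
    _ = ‖l * (B + G) * u + l * H * v‖ := by
        rw [mul_assoc, mul_assoc, ← mul_add, norm_mul, hl, one_mul]

theorem norm_mul_add_add_mul_le [SeminormedRing 𝕜] {P Q μ u v : 𝕜} {N : ℝ}
    (hP : ‖P‖ ≤ N) (hQ : ‖Q‖ ≤ N) :
    ‖P * u + (μ + Q) * v‖ ≤ N * ‖u‖ + (‖μ‖ + N) * ‖v‖ :=
  calc ‖P * u + (μ + Q) * v‖ ≤ ‖P‖ * ‖u‖ + ‖μ + Q‖ * ‖v‖ :=
        (norm_add_le _ _).trans (add_le_add (norm_mul_le _ _) (norm_mul_le _ _))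
    _ ≤ N * ‖u‖ + (‖μ‖ + N) * ‖v‖ := by
        gcongr
        exact (norm_add_le μ Q).trans (by gcongr)

end NormBounds

/-- Here `X` and `Y` play the roles of `|ξ'|` and `|η'|`, `s` and `t` of `|ξ|` and `|η|`, and
`k` of the bound `M₁^{2q}K` on `|x₁|^{2q}`. -/
theorem lt_half_of_cone_estimates {α e k N ν s t X Y K : ℝ} (hs : 0 ≤ s) (ht : 0 ≤ t)
    (hk : 0 ≤ k) (hX : α * s - e * t ≤ X) (hXY : X < k * Y) (hY : Y ≤ N * s + ν * t)
    (hα : 2 / 3 ≤ α - k * N) (hν : k * ν + e ≤ K / 3) : s < K * t / 2 := by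
  have : 2 / 3 * s < K / 3 * t :=
    calc 2 / 3 * s ≤ (α - k * N) * s := by gcongr
      _ < k * Y + e * t - k * N * s := by linarith
      _ ≤ k * (N * s + ν * t) + e * t - k * N * s := by gcongr
      _ = (k * ν + e) * t := by ring
      _ ≤ K / 3 * t := by gcongr
  linarith

theorem vertical_cone_contraction_general (q : ℕ) (lam mu : ℂ)
    (hlam : ‖lam‖ = 1) (m M N M₁ : ℝ)
    (hN0 : 0 ≤ N)
    (x x₁ : ℂ) (hx : ‖x‖ < 1) (hx₁ : ‖x₁‖ ≤ M₁ * ‖x‖)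
    (hA₁ : 2 / 3 ≤ ‖1 + ((q : ℂ) + 1) * x ^ q‖ -
      (m + M₁ ^ (2 * q) * N) * ‖x‖ ^ (2 * q))
    (hA₂ : M₁ ^ (2 * q) * (‖mu‖ + N) + M * ‖x‖ ^ 2 ≤ 1 / 3)
    (Gx Gy Px Py : ℂ)
    (hGx : ‖Gx‖ ≤ m * ‖x‖ ^ (2 * q))
    (hGy : ‖Gy‖ ≤ M * ‖x‖ ^ (2 * q + 2))
    (hPx : ‖Px‖ ≤ N) (hPy : ‖Py‖ ≤ N)
    (ξ η : ℂ)
    (hcone : ‖lam * (1 + ((q : ℂ) + 1) * x ^ q + Gx) * ξ + lam * Gy * η‖ <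
      ‖x₁‖ ^ (2 * q) * ‖Px * ξ + (mu + Py) * η‖) :
    ‖ξ‖ < ‖x‖ ^ (2 * q) * ‖η‖ ∧
    ‖Px * ξ + (mu + Py) * η‖ ≤ (‖mu‖ + 3 / 2 * N) * ‖η‖ := by
  set K := ‖x‖ ^ (2 * q)
  have hK0 : 0 ≤ K := by positivity
  have hK1 : K ≤ 1 := pow_le_one₀ (norm_nonneg x) hx.le
  have hx₁K : ‖x₁‖ ^ (2 * q) ≤ M₁ ^ (2 * q) * K := by
    rw [← mul_pow]; exact pow_le_pow_left₀ (norm_nonneg x₁) hx₁ _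
  have hGy' : ‖Gy‖ ≤ M * ‖x‖ ^ 2 * K := by rwa [mul_assoc, ← pow_add, add_comm]
  have hξ' := le_norm_mul_add_mul_of_norm_eq_one (B := 1 + ((q : ℂ) + 1) * x ^ q)
    (u := ξ) (v := η) hlam hGx hGy'
  have hη' := norm_mul_add_add_mul_le (u := ξ) (v := η) (μ := mu) hPx hPy
  have hhalf : ‖ξ‖ < K * ‖η‖ / 2 :=
    lt_half_of_cone_estimates (norm_nonneg ξ) (norm_nonneg η)
      ((pow_nonneg (norm_nonneg x₁) _).trans hx₁K) hξ'
      (hcone.trans_le (by gcongr)) hη' (by linarith)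
      (by linarith [mul_le_mul_of_nonneg_right hA₂ hK0])
  have hξη : ‖ξ‖ ≤ ‖η‖ / 2 :=
    hhalf.le.trans (by gcongr; exact mul_le_of_le_one_left (norm_nonneg η) hK1)
  refine ⟨by linarith [norm_nonneg ξ], ?_⟩
  calc ‖Px * ξ + (mu + Py) * η‖ ≤ N * ‖ξ‖ + (‖mu‖ + N) * ‖η‖ := hη'
    _ ≤ N * (‖η‖ / 2) + (‖mu‖ + N) * ‖η‖ := by gcongr
    _ = (‖mu‖ + 3 / 2 * N) * ‖η‖ := by ring

/-- **Vertical cone invariance and contraction in the repelling sectors.** If the image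
`(ξ', η')` of a nonzero tangent vector `(ξ, η)` under the derivative of the normal-form
semi-parabolic Hénon map lies in the vertical cone `{|ξ'| < |x₁|^{2q}|η'|}` at the image point,
then `(ξ, η)` lies in the vertical cone at `(x, y)` and `|η'| ≤ (|μ| + (3/2)N)|η|`. -/
theorem vertical_cone_contraction (q : ℕ) (hq : 1 ≤ q) (lam mu : ℂ)
    (hlam : ‖lam‖ = 1) (m M N M₁ : ℝ)
    (hm : 0 ≤ m) (hM : 0 ≤ M) (hN0 : 0 ≤ N) (hM₁ : 0 ≤ M₁) (hN : N ≤ 1 / 3)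
    (x x₁ : ℂ) (hx : ‖x‖ < 1) (hx₁ : ‖x₁‖ ≤ M₁ * ‖x‖)
    (hA₁ : 2 / 3 ≤ ‖1 + ((q : ℂ) + 1) * x ^ q‖ -
      (m + M₁ ^ (2 * q) * N) * ‖x‖ ^ (2 * q))
    (hA₂ : M₁ ^ (2 * q) * (‖mu‖ + N) + M * ‖x‖ ^ 2 ≤ 1 / 3)
    (Gx Gy Px Py : ℂ)
    (hGx : ‖Gx‖ ≤ m * ‖x‖ ^ (2 * q))
    (hGy : ‖Gy‖ ≤ M * ‖x‖ ^ (2 * q + 2))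
    (hPx : ‖Px‖ ≤ N) (hPy : ‖Py‖ ≤ N)
    (ξ η : ℂ) (hne : (ξ, η) ≠ (0, 0))
    (hcone : ‖lam * (1 + ((q : ℂ) + 1) * x ^ q + Gx) * ξ + lam * Gy * η‖ <
      ‖x₁‖ ^ (2 * q) * ‖Px * ξ + (mu + Py) * η‖) :
    ‖ξ‖ < ‖x‖ ^ (2 * q) * ‖η‖ ∧
    ‖Px * ξ + (mu + Py) * η‖ ≤ (‖mu‖ + 3 / 2 * N) * ‖η‖ :=
  vertical_cone_contraction_general q lam mu hlam m M N M₁ hN0 x x₁ hx hx₁ hA₁ hA₂ Gx Gy Px Py hGx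
    hGy hPx hPy ξ η hcone
end

section
/- Technical integral estimate: For every integer q ≥ 1 and all complex numbers x₁, x₂ with |x₂| ≤ |x₁|, one has |x₁|^q ≤ 2(q+1)·∫₀¹ |t·x₁ + (1−t)·x₂|^q dt. -/
open Metric Filter Topology Set intervalIntegral

noncomputable section

theorem integral_two_mul_sub_one_pow (q : ℕ) :
    ∫ t in (1 / 2 : ℝ)..1, (2 * t - 1) ^ q = 1 / (2 * ((q : ℝ) + 1)) := by
  have hsub := integral_comp_mul_sub (a := (1 / 2 : ℝ)) (b := 1) (fun u : ℝ => u ^ q)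
    two_ne_zero 1
  rw [hsub, integral_pow]
  norm_num
  field_simp

section NormedSpace

variable {E : Type*} [NormedAddCommGroup E] [NormedSpace ℝ E]

theorem two_mul_sub_one_mul_norm_le_norm_smul_add_smul {x y : E} (h : ‖y‖ ≤ ‖x‖) {t : ℝ}
    (ht₀ : 0 ≤ t) (ht₁ : t ≤ 1) : (2 * t - 1) * ‖x‖ ≤ ‖t • x + (1 - t) • y‖ :=
  calc (2 * t - 1) * ‖x‖ ≤ t * ‖x‖ - (1 - t) * ‖y‖ := by nlinarith
    _ = ‖t • x‖ - ‖-((1 - t) • y)‖ := by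
      rw [norm_neg, norm_smul, norm_smul, Real.norm_of_nonneg ht₀,
        Real.norm_of_nonneg (sub_nonneg.mpr ht₁)]
    _ ≤ ‖t • x - -((1 - t) • y)‖ := norm_sub_norm_le _ _
    _ = ‖t • x + (1 - t) • y‖ := by rw [sub_neg_eq_add]

theorem norm_pow_le_mul_integral_norm_smul_add_smul_pow (q : ℕ) {x y : E} (h : ‖y‖ ≤ ‖x‖) :
    ‖x‖ ^ q ≤ 2 * ((q : ℝ) + 1) * ∫ t in (0 : ℝ)..1, ‖t • x + (1 - t) • y‖ ^ q := by
  have hcont : Continuous fun t : ℝ => ‖t • x + (1 - t) • y‖ ^ q := by fun_prop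
  calc ‖x‖ ^ q = 2 * ((q : ℝ) + 1) * ∫ t in (1 / 2 : ℝ)..1, ((2 * t - 1) * ‖x‖) ^ q := by
        simp only [mul_pow, integral_mul_const, integral_two_mul_sub_one_pow]
        field_simp
    _ ≤ 2 * ((q : ℝ) + 1) * ∫ t in (1 / 2 : ℝ)..1, ‖t • x + (1 - t) • y‖ ^ q := by
        gcongr
        refine integral_mono_on (by norm_num) (Continuous.intervalIntegrable (by fun_prop) _ _)
          (hcont.intervalIntegrable _ _) ?_
        intro t ht
        have ht₀ : 0 ≤ t := by linarith [ht.1]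
        exact pow_le_pow_left₀ (by nlinarith [ht.1, norm_nonneg x])
          (two_mul_sub_one_mul_norm_le_norm_smul_add_smul h ht₀ ht.2) q
    _ ≤ 2 * ((q : ℝ) + 1) * ∫ t in (0 : ℝ)..1, ‖t • x + (1 - t) • y‖ ^ q := by
        gcongr
        exact integral_mono_interval (by norm_num) (by norm_num) le_rfl
          (Eventually.of_forall fun t => by positivity) (hcont.intervalIntegrable _ _)

end NormedSpace

theorem integral_estimate_general (q : ℕ) (x₁ x₂ : ℂ)
    (h : ‖x₂‖ ≤ ‖x₁‖) :
    ‖x₁‖ ^ q ≤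
      2 * ((q : ℝ) + 1) *
        ∫ t in (0 : ℝ)..1, ‖(t : ℂ) * x₁ + (1 - (t : ℂ)) * x₂‖ ^ q := by
  simpa only [Complex.real_smul, Complex.ofReal_sub, Complex.ofReal_one] using
    norm_pow_le_mul_integral_norm_smul_add_smul_pow q h

/-- **Technical integral estimate.** For `q ≥ 1` and complex numbers `x₁, x₂` with
`|x₂| ≤ |x₁|`, one has `|x₁|^q ≤ 2(q+1)·∫₀¹ |t x₁ + (1−t) x₂|^q dt`. -/
theorem integral_estimate (q : ℕ) (hq : 1 ≤ q) (x₁ x₂ : ℂ)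
    (h : ‖x₂‖ ≤ ‖x₁‖) :
    ‖x₁‖ ^ q ≤
      2 * ((q : ℝ) + 1) *
        ∫ t in (0 : ℝ)..1, ‖(t : ℂ) * x₁ + (1 - (t : ℂ)) * x₂‖ ^ q :=
  integral_estimate_general q x₁ x₂ h
end
end

section
/- Growth bound along a segment for a holomorphic function with small derivative: Let q ≥ 1 be an integer, let y₁, y₂ ∈ ℂ, and let φ be a holomorphic function on an open set containing the segment [y₂, y₁] = {t·y₁ + (1−t)·y₂ : t ∈ [0,1]} such that |φ'(z)| ≤ 1 and |φ'(z)| ≤ |φ(z)|^{2q} for every z on the segment. Then |φ(y₁) − φ(y₂)| ≤ |y₁ − y₂| · (|φ(y₂)| + |y₁ − y₂|)^{2q}. -/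
/-! Since `‖φ'‖ ≤ 1`, the mean value inequality keeps `φ` within `‖y₁ - y₂‖` of `φ y₂` on the
segment, so there `‖φ'‖ ≤ ‖φ‖ ^ (2q) ≤ (‖φ y₂‖ + ‖y₁ - y₂‖) ^ (2q)`; a second application of the
mean value inequality with this constant gives the bound. -/

section SegmentBounds

variable {𝕜 G : Type*} [RCLike 𝕜] [NormedAddCommGroup G] [NormedSpace 𝕜 G] {f : 𝕜 → G}
  {x y : 𝕜}

theorem norm_le_norm_add_of_mem_segment_of_norm_deriv_le_one
    (hf : ∀ z ∈ segment ℝ x y, DifferentiableAt 𝕜 f z)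
    (hd : ∀ z ∈ segment ℝ x y, ‖deriv f z‖ ≤ 1) {z : 𝕜} (hz : z ∈ segment ℝ x y) :
    ‖f z‖ ≤ ‖f x‖ + ‖y - x‖ := by
  have hfz : ‖f z - f x‖ ≤ 1 * ‖z - x‖ :=
    (convex_segment x y).norm_image_sub_le_of_norm_deriv_le hf hd (left_mem_segment ℝ x y) hz
  calc ‖f z‖ ≤ ‖f x‖ + ‖f z - f x‖ := norm_le_norm_add_norm_sub' (f z) (f x)
    _ ≤ ‖f x‖ + ‖y - x‖ := by
      linarith [norm_sub_le_of_mem_segment hz]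

theorem norm_image_sub_le_of_norm_deriv_le_one_of_norm_deriv_le_norm_pow (n : ℕ)
    (hf : ∀ z ∈ segment ℝ x y, DifferentiableAt 𝕜 f z)
    (hd₁ : ∀ z ∈ segment ℝ x y, ‖deriv f z‖ ≤ 1)
    (hdn : ∀ z ∈ segment ℝ x y, ‖deriv f z‖ ≤ ‖f z‖ ^ n) :
    ‖f y - f x‖ ≤ ‖y - x‖ * (‖f x‖ + ‖y - x‖) ^ n := by
  have hd : ∀ z ∈ segment ℝ x y, ‖deriv f z‖ ≤ (‖f x‖ + ‖y - x‖) ^ n := fun z hz =>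
    (hdn z hz).trans <| pow_le_pow_left₀ (norm_nonneg _)
      (norm_le_norm_add_of_mem_segment_of_norm_deriv_le_one hf hd₁ hz) n
  rw [mul_comm]
  exact (convex_segment x y).norm_image_sub_le_of_norm_deriv_le hf hd
    (left_mem_segment ℝ x y) (right_mem_segment ℝ x y)

end SegmentBounds

theorem segment_growth_bound_general (q : ℕ) (y₁ y₂ : ℂ) (U : Set ℂ) (hU : IsOpen U)
    (hseg : segment ℝ y₂ y₁ ⊆ U) (φ : ℂ → ℂ) (hφ : DifferentiableOn ℂ φ U)
    (hd1 : ∀ z ∈ segment ℝ y₂ y₁, ‖deriv φ z‖ ≤ 1)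
    (hd2 : ∀ z ∈ segment ℝ y₂ y₁, ‖deriv φ z‖ ≤ ‖φ z‖ ^ (2 * q)) :
    ‖φ y₁ - φ y₂‖ ≤
      ‖y₁ - y₂‖ * (‖φ y₂‖ + ‖y₁ - y₂‖) ^ (2 * q) :=
  norm_image_sub_le_of_norm_deriv_le_one_of_norm_deriv_le_norm_pow (2 * q)
    (fun _ hz => hφ.differentiableAt (hU.mem_nhds (hseg hz))) hd1 hd2

/-- **Growth bound along a segment for a holomorphic function with small derivative.** If `φ`
is holomorphic on an open set containing the segment `[y₂, y₁]` with `|φ'| ≤ 1` and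
`|φ'| ≤ |φ|^{2q}` on the segment, then
`|φ(y₁) − φ(y₂)| ≤ |y₁ − y₂|·(|φ(y₂)| + |y₁ − y₂|)^{2q}`. -/
theorem segment_growth_bound (q : ℕ) (hq : 1 ≤ q) (y₁ y₂ : ℂ) (U : Set ℂ) (hU : IsOpen U)
    (hseg : segment ℝ y₂ y₁ ⊆ U) (φ : ℂ → ℂ) (hφ : DifferentiableOn ℂ φ U)
    (hd1 : ∀ z ∈ segment ℝ y₂ y₁, ‖deriv φ z‖ ≤ 1)
    (hd2 : ∀ z ∈ segment ℝ y₂ y₁, ‖deriv φ z‖ ≤ ‖φ z‖ ^ (2 * q)) :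
    ‖φ y₁ - φ y₂‖ ≤
      ‖y₁ - y₂‖ * (‖φ y₂‖ + ‖y₁ - y₂‖) ^ (2 * q) :=
  segment_growth_bound_general q y₁ y₂ U hU hseg φ hφ hd1 hd2
end

section
/- Browder's fixed point theorem: Let (X, d) be a nonempty complete metric space and let f : X → X satisfy d(f(x), f(y)) ≤ h(d(x, y)) for all x, y ∈ X, where h : [0, ∞) → [0, ∞) is monotone increasing, continuous from the right, and satisfies h(s) < s for every s > 0. Then f has a unique fixed point x* ∈ X, and for every x ∈ X the sequence of iterates f^{∘n}(x) converges to x*. -/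
open Metric Filter Topology Set

noncomputable section

/-- **Browder's fixed point theorem.** Let `(X, d)` be a nonempty complete metric space and
`f : X → X` with `d(f x, f y) ≤ h(d(x, y))`, where `h : [0,∞) → [0,∞)` is monotone increasing,
continuous from the right, and `h(s) < s` for `s > 0`. Then `f` has a unique fixed point `x*`
and `f^[n] x → x*` for every `x`. -/
theorem browder_fixed_point {X : Type*} [MetricSpace X] [CompleteSpace X] [Nonempty X]
    (f : X → X) (h : ℝ → ℝ)
    (hpos : ∀ s : ℝ, 0 ≤ s → 0 ≤ h s)
    (hmono : ∀ s t : ℝ, 0 ≤ s → s ≤ t → h s ≤ h t)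
    (hright : ∀ s : ℝ, 0 ≤ s → Filter.Tendsto h (nhdsWithin s (Set.Ioi s)) (nhds (h s)))
    (hlt : ∀ s : ℝ, 0 < s → h s < s)
    (hf : ∀ x y : X, dist (f x) (f y) ≤ h (dist x y)) :
    ∃ xs : X, f xs = xs ∧ (∀ y : X, f y = y → y = xs) ∧
      ∀ x : X, Filter.Tendsto (fun n : ℕ => f^[n] x) Filter.atTop (nhds xs) := by
  -- h 0 = 0
  have h0 : h 0 = 0 := by
    by_contra hc
    have hpos0 : 0 < h 0 := lt_of_le_of_ne (hpos 0 le_rfl) (Ne.symm hc)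
    have h1 : h 0 ≤ h (h 0) := hmono 0 (h 0) le_rfl (hpos 0 le_rfl)
    have h2 : h (h 0) < h 0 := hlt (h 0) hpos0
    linarith
  -- h s ≤ s for s ≥ 0
  have hle : ∀ s : ℝ, 0 ≤ s → h s ≤ s := by
    intro s hs
    rcases eq_or_lt_of_le hs with rfl | hs'
    · simp [h0]
    · exact (hlt s hs').le
  -- f is continuous
  have hcont : Continuous f := by
    have : LipschitzWith 1 f := by
      apply LipschitzWith.of_dist_le_mul
      intro x y
      simpa using (hf x y).trans (hle _ dist_nonneg)
  -- uniqueness of fixed points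
    exact this.continuous
  have huniq : ∀ y z : X, f y = y → f z = z → y = z := by
    intro y z hy hz
    by_contra hne
    have hd : 0 < dist y z := dist_pos.mpr hne
    have : dist y z ≤ h (dist y z) := by
      have := hf y z
      rwa [hy, hz] at this
    have := hlt (dist y z) hd
    linarith
  -- main: for each x, the iterates converge to a fixed point
  have key : ∀ x : X, ∃ z : X, f z = z ∧
      Tendsto (fun n : ℕ => f^[n] x) atTop (𝓝 z) := by
    intro x
    set u : ℕ → X := fun n => f^[n] x with hu
    have husucc : ∀ n, u (n + 1) = f (u n) := fun n => Function.iterate_succ_apply' f n x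
    set a : ℕ → ℝ := fun n => dist (u n) (u (n + 1)) with ha
    have ha_nonneg : ∀ n, 0 ≤ a n := fun n => dist_nonneg
    have ha_succ : ∀ n, a (n + 1) ≤ h (a n) := by
      intro n
      have : a (n + 1) = dist (f (u n)) (f (u (n + 1))) := by
        simp [ha, husucc]
      rw [this]
      exact hf _ _
    have ha_anti : Antitone a := by
      apply antitone_nat_of_succ_le
      intro n
      exact (ha_succ n).trans (hle _ (ha_nonneg n))
    have hbdd : BddBelow (Set.range a) := ⟨0, fun r ⟨n, hn⟩ => hn ▸ ha_nonneg n⟩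
    set c : ℝ := ⨅ n, a n with hc
    have hc_nonneg : 0 ≤ c := le_ciInf ha_nonneg
    have ha_lim : Tendsto a atTop (𝓝 c) := tendsto_atTop_ciInf ha_anti hbdd
    have hc_le : ∀ n, c ≤ a n := fun n => ciInf_le hbdd n
    -- show c = 0
    have hc0 : c = 0 := by
      by_contra hc0
      have hcpos : 0 < c := lt_of_le_of_ne hc_nonneg (Ne.symm hc0)
      by_cases hex : ∃ N, a N = c
      · obtain ⟨N, hN⟩ := hex
        have h1 : a (N + 1) ≤ h c := hN ▸ ha_succ N
        have h2 : h c < c := hlt c hcpos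
        have h3 : c ≤ a (N + 1) := hc_le (N + 1)
        linarith
      · push_neg at hex
        have hmem : ∀ n, a n ∈ Set.Ioi c := fun n =>
          lt_of_le_of_ne (hc_le n) (Ne.symm (hex n))
        have hwithin : Tendsto a atTop (𝓝[Set.Ioi c] c) :=
          tendsto_nhdsWithin_of_tendsto_nhds_of_eventually_within a ha_lim
            (Eventually.of_forall hmem)
        have hha : Tendsto (fun n => h (a n)) atTop (𝓝 (h c)) :=
          (hright c hc_nonneg).comp hwithin
        have hshift : Tendsto (fun n => a (n + 1)) atTop (𝓝 c) :=
          ha_lim.comp (tendsto_add_atTop_nat 1)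
        have : c ≤ h c := le_of_tendsto_of_tendsto' hshift hha ha_succ
        have := hlt c hcpos
        linarith
    rw [hc0] at ha_lim
    -- Cauchy
    have hcauchy : CauchySeq u := by
      rw [Metric.cauchySeq_iff']
      intro ε hε
      have hεh : 0 < ε - h ε := by have := hlt ε hε; linarith
      obtain ⟨N, hN⟩ := (ha_lim.eventually (gt_mem_nhds hεh)).exists
      have claim : ∀ m : ℕ, dist (u (N + m)) (u N) < ε := by
        intro m
        induction m with
        | zero => simpa using hε
        | succ m ih =>
          have h1 : dist (u (N + m + 1)) (u (N + 1)) ≤ h (dist (u (N + m)) (u N)) := by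
            rw [husucc, husucc]
            exact hf _ _
          have h2 : h (dist (u (N + m)) (u N)) ≤ h ε :=
            hmono _ _ dist_nonneg ih.le
          calc dist (u (N + (m + 1))) (u N)
              ≤ dist (u (N + m + 1)) (u (N + 1)) + dist (u (N + 1)) (u N) := by
                have : N + (m + 1) = N + m + 1 := by ring
                rw [this]
                exact dist_triangle _ _ _
            _ ≤ h ε + a N := by
                have : dist (u (N + 1)) (u N) = a N := dist_comm _ _
                rw [this]
                exact add_le_add (h1.trans h2) le_rfl
            _ < ε := by linarith
      refine ⟨N, fun n hn => ?_⟩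
      have : n = N + (n - N) := by omega
      rw [this]
      exact claim _
    obtain ⟨z, hz⟩ := cauchySeq_tendsto_of_complete hcauchy
    refine ⟨z, ?_, hz⟩
    have h1 : Tendsto (fun n => u (n + 1)) atTop (𝓝 z) :=
      hz.comp (tendsto_add_atTop_nat 1)
    have h2 : Tendsto (fun n => f (u n)) atTop (𝓝 (f z)) :=
      (hcont.tendsto z).comp hz
    have : (fun n => u (n + 1)) = fun n => f (u n) := funext husucc
    rw [this] at h1
    exact tendsto_nhds_unique h2 h1
  obtain ⟨z, hz, htz⟩ := key (Classical.arbitrary X)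
  refine ⟨z, hz, fun y hy => huniq y z hy hz, fun x => ?_⟩
  obtain ⟨w, hw, htw⟩ := key x
  rwa [huniq w z hw hz] at htw
end
end
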